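/- Let X, X_∅, X_{1}, X_{2}, X_{1,2} be jointly distributed finite random variables and suppose 2·I(X;X_∅) + I(X; X_{1}, X_{2}, X_{1,2} | X_∅) + I(X_{1}; X_{2} | X_∅) = I(X; X_{1}, X_{1,2}). Then: X and X_∅ are independent; X − (X_{1}, X_{1,2}) − (X_∅, X_{2}) form a Markov chain; and X_{1} − X_∅ − X_{2} form a Markov chain. -/
import Mathlib


open scoped BigOperators

namespace MDC

structure FinProb (Ω : Type*) [Fintype Ω] where
  μ : Ω → ℝ
  nonneg : ∀ ω, 0 ≤ μ ω
  sum_one : ∑ ω, μ ω = 1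

variable {Ω : Type*} [Fintype Ω]

/-- Probability that the random variable `f` takes the value `a`. -/
noncomputable def pr (P : FinProb Ω) {A : Type*} [DecidableEq A] (f : Ω → A) (a : A) : ℝ :=
  ∑ ω, if f ω = a then P.μ ω else 0

/-- Shannon entropy (base 2) of a finite random variable. -/
noncomputable def H (P : FinProb Ω) {A : Type*} [Fintype A] [DecidableEq A] (f : Ω → A) : ℝ :=
  - ∑ a, pr P f a * Real.logb 2 (pr P f a)

/-- Conditional entropy H(f|g). -/
noncomputable def Hcond (P : FinProb Ω) {A B : Type*} [Fintype A] [DecidableEq A]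
    [Fintype B] [DecidableEq B] (f : Ω → A) (g : Ω → B) : ℝ :=
  H P (fun ω => (f ω, g ω)) - H P g

/-- Mutual information I(f;g). -/
noncomputable def MI (P : FinProb Ω) {A B : Type*} [Fintype A] [DecidableEq A]
    [Fintype B] [DecidableEq B] (f : Ω → A) (g : Ω → B) : ℝ :=
  H P f + H P g - H P (fun ω => (f ω, g ω))

/-- Conditional mutual information I(f;g|h). -/
noncomputable def CMI (P : FinProb Ω) {A B C : Type*} [Fintype A] [DecidableEq A]
    [Fintype B] [DecidableEq B] [Fintype C] [DecidableEq C]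
    (f : Ω → A) (g : Ω → B) (h : Ω → C) : ℝ :=
  H P (fun ω => (f ω, h ω)) + H P (fun ω => (g ω, h ω))
    - H P (fun ω => (f ω, g ω, h ω)) - H P h

/-- Independence of two finite random variables. -/
def Indep (P : FinProb Ω) {A B : Type*} [DecidableEq A] [DecidableEq B]
    (f : Ω → A) (g : Ω → B) : Prop :=
  ∀ a b, pr P (fun ω => (f ω, g ω)) (a, b) = pr P f a * pr P g b

/-- Conditional independence of `f` and `g` given `h` (a Markov chain f − h − g). -/
def CondIndep (P : FinProb Ω) {A B C : Type*} [DecidableEq A] [DecidableEq B] [DecidableEq C]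
    (f : Ω → A) (g : Ω → B) (h : Ω → C) : Prop :=
  ∀ a b c, pr P h c * pr P (fun ω => (f ω, g ω, h ω)) (a, b, c) =
    pr P (fun ω => (f ω, h ω)) (a, c) * pr P (fun ω => (g ω, h ω)) (b, c)

/-- Binary entropy function. -/
noncomputable def Hb (p : ℝ) : ℝ := -(p * Real.logb 2 p) - (1 - p) * Real.logb 2 (1 - p)

/-- Expected Hamming distortion between two random variables. -/
noncomputable def Edist (P : FinProb Ω) {A : Type*} [DecidableEq A] (f g : Ω → A) : ℝ :=
  ∑ ω, P.μ ω * (if f ω = g ω then 0 else 1)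

end MDC

open MDC

section Aux
variable {Ω : Type*} [Fintype Ω] (P : FinProb Ω)

lemma pr_nonneg {A : Type*} [DecidableEq A] (f : Ω → A) (a : A) : 0 ≤ pr P f a :=
  Finset.sum_nonneg fun ω _ => by split <;> simp [P.nonneg ω]

lemma sum_pr {A : Type*} [Fintype A] [DecidableEq A] (f : Ω → A) : ∑ a, pr P f a = 1 := by
  rw [show ∑ a, pr P f a = ∑ a, ∑ ω, if f ω = a then P.μ ω else 0 from rfl,
    Finset.sum_comm]
  rw [← P.sum_one]
  exact Finset.sum_congr rfl fun ω _ => by simp [Finset.sum_ite_eq]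

lemma pr_le {A B : Type*} [DecidableEq A] [DecidableEq B] (f : Ω → A) (g : Ω → B)
    (a : A) (b : B) (hfg : ∀ ω, f ω = a → g ω = b) : pr P f a ≤ pr P g b := by
  refine Finset.sum_le_sum fun ω _ => ?_
  by_cases hf : f ω = a
  · simp [hf, hfg ω hf]
  · simp only [if_neg hf]
    split <;> simp [P.nonneg ω]

lemma pr_marg_fst {A B : Type*} [Fintype B] [DecidableEq A] [DecidableEq B]
    (f : Ω → A) (g : Ω → B) (a : A) :
    ∑ b, pr P (fun ω => (f ω, g ω)) (a, b) = pr P f a := by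
  unfold pr
  rw [Finset.sum_comm]
  refine Finset.sum_congr rfl fun ω _ => ?_
  by_cases hf : f ω = a <;> simp [Prod.ext_iff, hf, Finset.sum_ite_eq]

lemma pr_marg_snd {A B : Type*} [Fintype A] [DecidableEq A] [DecidableEq B]
    (f : Ω → A) (g : Ω → B) (b : B) :
    ∑ a, pr P (fun ω => (f ω, g ω)) (a, b) = pr P g b := by
  unfold pr
  rw [Finset.sum_comm]
  refine Finset.sum_congr rfl fun ω _ => ?_
  by_cases hg : g ω = b <;> simp [Prod.ext_iff, hg, Finset.sum_ite_eq]

lemma pr_marg_mid {A B C : Type*} [Fintype B] [DecidableEq A] [DecidableEq B] [DecidableEq C]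
    (f : Ω → A) (g : Ω → B) (h : Ω → C) (a : A) (c : C) :
    ∑ b, pr P (fun ω => (f ω, g ω, h ω)) (a, b, c) = pr P (fun ω => (f ω, h ω)) (a, c) := by
  unfold pr
  rw [Finset.sum_comm]
  refine Finset.sum_congr rfl fun ω _ => ?_
  by_cases hf : f ω = a ∧ h ω = c
  · simp [Prod.ext_iff, hf.1, hf.2, Finset.sum_ite_eq]
  · simp only [Prod.mk.injEq]
    rw [if_neg (by tauto)]
    exact Finset.sum_eq_zero fun b _ => if_neg (by tauto)

end Aux

section Gibbs
-- Gibbs lemmas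
lemma gibbs_le {ι : Type*} [Fintype ι] (p q : ι → ℝ) (hp : ∀ i, 0 ≤ p i)
    (hq : ∀ i, 0 ≤ q i) (hps : ∑ i, p i = 1) (hqs : ∑ i, q i ≤ 1)
    (habs : ∀ i, q i = 0 → p i = 0) :
    ∑ i, p i * Real.log (q i) ≤ ∑ i, p i * Real.log (p i) := by
  have key : ∀ i, p i * Real.log (q i) - p i * Real.log (p i) ≤ q i - p i := by
    intro i
    rcases eq_or_lt_of_le (hp i) with h0 | h0
    · rw [← h0]; simpa using hq i
    · have hq0 : 0 < q i := by
        rcases eq_or_lt_of_le (hq i) with h1 | h1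
        · exact absurd (habs i h1.symm) h0.ne'
        · exact h1
      have := Real.log_le_sub_one_of_pos (x := q i / p i) (by positivity)
      have hlog : Real.log (q i / p i) = Real.log (q i) - Real.log (p i) :=
        Real.log_div hq0.ne' h0.ne'
      have h2 := mul_le_mul_of_nonneg_left this h0.le
      have h3 : p i * (q i / p i - 1) = q i - p i := by field_simp
      rw [hlog, mul_sub] at h2
      linarith
  calc ∑ i, p i * Real.log (q i) ≤ ∑ i, (p i * Real.log (p i) + (q i - p i)) :=
        Finset.sum_le_sum (fun i _ => by linarith [key i])
    _ = ∑ i, p i * Real.log (p i) + (∑ i, q i - ∑ i, p i) := by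
        rw [Finset.sum_add_distrib, Finset.sum_sub_distrib]
    _ ≤ ∑ i, p i * Real.log (p i) := by rw [hps]; linarith

lemma gibbs_eq {ι : Type*} [Fintype ι] (p q : ι → ℝ) (hp : ∀ i, 0 ≤ p i)
    (hq : ∀ i, 0 ≤ q i) (hps : ∑ i, p i = 1) (hqs : ∑ i, q i ≤ 1)
    (habs : ∀ i, q i = 0 → p i = 0)
    (heq : ∑ i, p i * Real.log (p i) ≤ ∑ i, p i * Real.log (q i)) :
    ∀ i, p i = q i := by
  set t : ι → ℝ := fun i => (q i - p i) - (p i * Real.log (q i) - p i * Real.log (p i)) with ht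
  have key : ∀ i, 0 ≤ t i := by
    intro i
    rcases eq_or_lt_of_le (hp i) with h0 | h0
    · simp only [ht, ← h0]; simpa using hq i
    · have hq0 : 0 < q i := by
        rcases eq_or_lt_of_le (hq i) with h1 | h1
        · exact absurd (habs i h1.symm) h0.ne'
        · exact h1
      have h1 := Real.log_le_sub_one_of_pos (x := q i / p i) (by positivity)
      have hlog : Real.log (q i / p i) = Real.log (q i) - Real.log (p i) :=
        Real.log_div hq0.ne' h0.ne'
      have h2 := mul_le_mul_of_nonneg_left h1 h0.le
      have h3 : p i * (q i / p i - 1) = q i - p i := by field_simp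
      rw [hlog, mul_sub] at h2
      simp only [ht]
      linarith
  have hsum : ∑ i, t i ≤ 0 := by
    have : ∑ i, t i = (∑ i, q i - ∑ i, p i) - (∑ i, p i * Real.log (q i) - ∑ i, p i * Real.log (p i)) := by
      simp only [ht, Finset.sum_sub_distrib]
    rw [this, hps]; linarith
  have hzero : ∀ i ∈ Finset.univ, t i = 0 := by
    intro i hi
    by_contra hne
    have hpos : 0 < t i := lt_of_le_of_ne (key i) (Ne.symm hne)
    have : 0 < ∑ j, t j := Finset.sum_pos' (fun j _ => key j) ⟨i, hi, hpos⟩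
    linarith
  intro i
  have hti := hzero i (Finset.mem_univ i)
  simp only [ht] at hti
  rcases eq_or_lt_of_le (hp i) with h0 | h0
  · rw [← h0] at hti ⊢; linarith [hti]
  · have hq0 : 0 < q i := by
      rcases eq_or_lt_of_le (hq i) with h1 | h1
      · exact absurd (habs i h1.symm) h0.ne'
      · exact h1
    by_contra hne
    have hx : q i / p i ≠ 1 := by
      intro hc
      exact hne ((div_eq_one_iff_eq h0.ne').mp hc).symm
    have h1 := Real.log_lt_sub_one_of_pos (x := q i / p i) (by positivity) hx
    have hlog : Real.log (q i / p i) = Real.log (q i) - Real.log (p i) :=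
      Real.log_div hq0.ne' h0.ne'
    have h2 := mul_lt_mul_of_pos_left h1 h0
    have h3 : p i * (q i / p i - 1) = q i - p i := by field_simp
    rw [hlog, mul_sub] at h2
    linarith


lemma gibbs_logb_le {ι : Type*} [Fintype ι] (p q : ι → ℝ) (hp : ∀ i, 0 ≤ p i)
    (hq : ∀ i, 0 ≤ q i) (hps : ∑ i, p i = 1) (hqs : ∑ i, q i ≤ 1)
    (habs : ∀ i, q i = 0 → p i = 0) :
    ∑ i, p i * Real.logb 2 (q i) ≤ ∑ i, p i * Real.logb 2 (p i) := by
  have h2 : (0:ℝ) < Real.log 2 := Real.log_pos one_lt_two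
  have key : ∀ r : ι → ℝ, ∑ i, p i * Real.logb 2 (r i) = (∑ i, p i * Real.log (r i)) / Real.log 2 := by
    intro r
    rw [Finset.sum_div]
    exact Finset.sum_congr rfl fun i _ => by rw [Real.logb, mul_div_assoc]
  rw [key p, key q]
  exact div_le_div_of_nonneg_right (gibbs_le p q hp hq hps hqs habs) h2.le

lemma gibbs_logb_eq {ι : Type*} [Fintype ι] (p q : ι → ℝ) (hp : ∀ i, 0 ≤ p i)
    (hq : ∀ i, 0 ≤ q i) (hps : ∑ i, p i = 1) (hqs : ∑ i, q i ≤ 1)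
    (habs : ∀ i, q i = 0 → p i = 0)
    (heq : ∑ i, p i * Real.logb 2 (p i) ≤ ∑ i, p i * Real.logb 2 (q i)) :
    ∀ i, p i = q i := by
  have h2 : (0:ℝ) < Real.log 2 := Real.log_pos one_lt_two
  have key : ∀ r : ι → ℝ, ∑ i, p i * Real.logb 2 (r i) = (∑ i, p i * Real.log (r i)) / Real.log 2 := by
    intro r
    rw [Finset.sum_div]
    exact Finset.sum_congr rfl fun i _ => by rw [Real.logb, mul_div_assoc]
  rw [key p, key q, div_le_div_iff_of_pos_right h2] at heq
  exact gibbs_eq p q hp hq hps hqs habs heq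

end Gibbs

section HComp
variable {Ω : Type*} [Fintype Ω] (P : FinProb Ω)

lemma pr_comp {A B : Type*} [DecidableEq A] [DecidableEq B]
    (f : Ω → A) (e : A → B) (he : Function.Injective e) (a : A) :
    pr P (fun ω => e (f ω)) (e a) = pr P f a := by
  refine Finset.sum_congr rfl fun ω _ => ?_
  congr 1
  simp [he.eq_iff]

lemma pr_comp_zero {A B : Type*} [Fintype A] [DecidableEq A] [DecidableEq B]
    (f : Ω → A) (e : A → B) (b : B) (hb : b ∉ Finset.image e Finset.univ) :
    pr P (fun ω => e (f ω)) b = 0 := by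
  refine Finset.sum_eq_zero fun ω _ => ?_
  rw [if_neg]
  intro hc
  exact hb (by simp [← hc])

lemma H_comp {A B : Type*} [Fintype A] [DecidableEq A] [Fintype B] [DecidableEq B]
    (f : Ω → A) (e : A → B) (he : Function.Injective e) :
    H P (fun ω => e (f ω)) = H P f := by
  unfold H
  congr 1
  rw [← Finset.sum_subset (Finset.subset_univ (Finset.image e Finset.univ))
    (fun b _ hb => by rw [pr_comp_zero P f e b hb]; simp)]
  rw [Finset.sum_image (fun a _ a' _ h => he h)]
  exact Finset.sum_congr rfl fun a _ => by rw [pr_comp P f e he]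
end HComp

section MIsec
variable {Ω : Type*} [Fintype Ω] (P : FinProb Ω)
variable {A B : Type*} [Fintype A] [DecidableEq A] [Fintype B] [DecidableEq B]

lemma MI_eq (f : Ω → A) (g : Ω → B) :
    MI P f g = ∑ x : A × B, pr P (fun ω => (f ω, g ω)) x * Real.logb 2 (pr P (fun ω => (f ω, g ω)) x)
      - ∑ x : A × B, pr P (fun ω => (f ω, g ω)) x * Real.logb 2 (pr P f x.1 * pr P g x.2) := by
  have hf : H P f = - ∑ x : A × B, pr P (fun ω => (f ω, g ω)) x * Real.logb 2 (pr P f x.1) := by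
    unfold H
    congr 1
    rw [Fintype.sum_prod_type]
    refine Finset.sum_congr rfl fun a _ => ?_
    dsimp only
    conv_rhs => rw [← Finset.sum_mul, pr_marg_fst]
  have hg : H P g = - ∑ x : A × B, pr P (fun ω => (f ω, g ω)) x * Real.logb 2 (pr P g x.2) := by
    unfold H
    congr 1
    rw [Fintype.sum_prod_type_right]
    refine Finset.sum_congr rfl fun b _ => ?_
    dsimp only
    conv_rhs => rw [← Finset.sum_mul, pr_marg_snd]
  have hq : ∑ x : A × B, pr P (fun ω => (f ω, g ω)) x * Real.logb 2 (pr P f x.1 * pr P g x.2)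
      = ∑ x : A × B, (pr P (fun ω => (f ω, g ω)) x * Real.logb 2 (pr P f x.1)
        + pr P (fun ω => (f ω, g ω)) x * Real.logb 2 (pr P g x.2)) := by
    refine Finset.sum_congr rfl fun x _ => ?_
    rcases eq_or_lt_of_le (pr_nonneg P (fun ω => (f ω, g ω)) x) with h0 | h0
    · rw [← h0]; ring
    · have h1 : 0 < pr P f x.1 :=
        lt_of_lt_of_le h0 (pr_le P _ f x x.1 (fun ω hω => by rw [← hω]))
      have h2 : 0 < pr P g x.2 :=
        lt_of_lt_of_le h0 (pr_le P _ g x x.2 (fun ω hω => by rw [← hω]))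
      rw [Real.logb_mul h1.ne' h2.ne', mul_add]
  rw [MI, hf, hg, hq, Finset.sum_add_distrib]
  unfold H
  ring

lemma MI_gibbs_hyps (f : Ω → A) (g : Ω → B) :
    (∀ x : A × B, 0 ≤ pr P (fun ω => (f ω, g ω)) x) ∧
    (∀ x : A × B, 0 ≤ pr P f x.1 * pr P g x.2) ∧
    (∑ x : A × B, pr P (fun ω => (f ω, g ω)) x = 1) ∧
    (∑ x : A × B, pr P f x.1 * pr P g x.2 ≤ 1) ∧
    (∀ x : A × B, pr P f x.1 * pr P g x.2 = 0 → pr P (fun ω => (f ω, g ω)) x = 0) := by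
  refine ⟨fun x => pr_nonneg P _ x, fun x => mul_nonneg (pr_nonneg P f _) (pr_nonneg P g _),
    sum_pr P _, ?_, ?_⟩
  · rw [Fintype.sum_prod_type]
    have : ∑ a, ∑ b, pr P f (a, b).1 * pr P g (a, b).2 = ∑ a, pr P f a * ∑ b, pr P g b := by
      exact Finset.sum_congr rfl fun a _ => by rw [Finset.mul_sum]
    rw [this]
    simp [sum_pr P g, sum_pr P f]
  · intro x hx
    rcases mul_eq_zero.mp hx with h0 | h0
    · refine le_antisymm ?_ (pr_nonneg P _ x)
      rw [← h0]
      exact pr_le P _ f x x.1 (fun ω hω => by rw [← hω])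
    · refine le_antisymm ?_ (pr_nonneg P _ x)
      rw [← h0]
      exact pr_le P _ g x x.2 (fun ω hω => by rw [← hω])

lemma MI_nonneg (f : Ω → A) (g : Ω → B) : 0 ≤ MI P f g := by
  obtain ⟨h1, h2, h3, h4, h5⟩ := MI_gibbs_hyps P f g
  rw [MI_eq P f g]
  have := gibbs_logb_le _ _ h1 h2 h3 h4 h5
  linarith

lemma MI_le_zero_indep (f : Ω → A) (g : Ω → B) (h : MI P f g ≤ 0) : Indep P f g := by
  obtain ⟨h1, h2, h3, h4, h5⟩ := MI_gibbs_hyps P f g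
  rw [MI_eq P f g] at h
  have := gibbs_logb_eq _ _ h1 h2 h3 h4 h5 (by linarith)
  intro a b
  exact this (a, b)
end MIsec

section CMIsec
variable {Ω : Type*} [Fintype Ω] (P : FinProb Ω)
variable {A B C : Type*} [Fintype A] [DecidableEq A] [Fintype B] [DecidableEq B]
  [Fintype C] [DecidableEq C]

lemma CMI_eq (f : Ω → A) (g : Ω → B) (h : Ω → C) :
    CMI P f g h = ∑ x : A × B × C, pr P (fun ω => (f ω, g ω, h ω)) x
        * Real.logb 2 (pr P (fun ω => (f ω, g ω, h ω)) x)
      - ∑ x : A × B × C, pr P (fun ω => (f ω, g ω, h ω)) x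
        * Real.logb 2 (pr P (fun ω => (f ω, h ω)) (x.1, x.2.2)
            * pr P (fun ω => (g ω, h ω)) (x.2.1, x.2.2) / pr P h x.2.2) := by
  have hfh : H P (fun ω => (f ω, h ω)) = -∑ x : A × B × C,
      pr P (fun ω => (f ω, g ω, h ω)) x
        * Real.logb 2 (pr P (fun ω => (f ω, h ω)) (x.1, x.2.2)) := by
    unfold H
    congr 1
    rw [Fintype.sum_prod_type, Fintype.sum_prod_type]
    refine Finset.sum_congr rfl fun a _ => ?_
    rw [Fintype.sum_prod_type, Finset.sum_comm]
    refine Finset.sum_congr rfl fun c _ => ?_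
    dsimp only
    conv_rhs => rw [← Finset.sum_mul, pr_marg_mid]
  have hgh : H P (fun ω => (g ω, h ω)) = -∑ x : A × B × C,
      pr P (fun ω => (f ω, g ω, h ω)) x
        * Real.logb 2 (pr P (fun ω => (g ω, h ω)) (x.2.1, x.2.2)) := by
    unfold H
    congr 1
    conv_rhs => rw [Fintype.sum_prod_type_right]
    refine Finset.sum_congr rfl fun y _ => ?_
    dsimp only
    rw [Prod.mk.eta]
    conv_rhs => rw [← Finset.sum_mul, pr_marg_snd]
  have hh : H P h = -∑ x : A × B × C,
      pr P (fun ω => (f ω, g ω, h ω)) x * Real.logb 2 (pr P h x.2.2) := by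
    unfold H
    congr 1
    conv_rhs => rw [Fintype.sum_prod_type_right, Fintype.sum_prod_type_right]
    refine Finset.sum_congr rfl fun c _ => ?_
    dsimp only
    have inner : ∀ b, ∑ a, pr P (fun ω => (f ω, g ω, h ω)) (a, b, c) * Real.logb 2 (pr P h c)
        = pr P (fun ω => (g ω, h ω)) (b, c) * Real.logb 2 (pr P h c) := fun b => by
      rw [← Finset.sum_mul, pr_marg_snd P f (fun ω => (g ω, h ω)) (b, c)]
    simp only [inner]
    rw [← Finset.sum_mul, pr_marg_snd P g h c]
  have hq : ∑ x : A × B × C, pr P (fun ω => (f ω, g ω, h ω)) x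
        * Real.logb 2 (pr P (fun ω => (f ω, h ω)) (x.1, x.2.2)
            * pr P (fun ω => (g ω, h ω)) (x.2.1, x.2.2) / pr P h x.2.2)
      = ∑ x : A × B × C, (pr P (fun ω => (f ω, g ω, h ω)) x
          * Real.logb 2 (pr P (fun ω => (f ω, h ω)) (x.1, x.2.2))
        + pr P (fun ω => (f ω, g ω, h ω)) x
          * Real.logb 2 (pr P (fun ω => (g ω, h ω)) (x.2.1, x.2.2))
        - pr P (fun ω => (f ω, g ω, h ω)) x * Real.logb 2 (pr P h x.2.2)) := by
    refine Finset.sum_congr rfl fun x _ => ?_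
    rcases eq_or_lt_of_le (pr_nonneg P (fun ω => (f ω, g ω, h ω)) x) with h0 | h0
    · rw [← h0]; ring
    · have h1 : 0 < pr P (fun ω => (f ω, h ω)) (x.1, x.2.2) :=
        lt_of_lt_of_le h0 (pr_le P _ _ x (x.1, x.2.2)
          (fun ω hω => by rw [← hω]))
      have h2 : 0 < pr P (fun ω => (g ω, h ω)) (x.2.1, x.2.2) :=
        lt_of_lt_of_le h0 (pr_le P _ _ x (x.2.1, x.2.2)
          (fun ω hω => by rw [← hω]))
      have h3 : 0 < pr P h x.2.2 :=
        lt_of_lt_of_le h0 (pr_le P _ h x x.2.2 (fun ω hω => by rw [← hω]))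
      rw [Real.logb_div (by positivity) h3.ne', Real.logb_mul h1.ne' h2.ne']
      ring
  rw [CMI, hfh, hgh, hh, hq]
  rw [Finset.sum_sub_distrib, Finset.sum_add_distrib]
  unfold H
  ring

lemma CMI_gibbs_hyps (f : Ω → A) (g : Ω → B) (h : Ω → C) :
    (∑ x : A × B × C, pr P (fun ω => (f ω, h ω)) (x.1, x.2.2)
        * pr P (fun ω => (g ω, h ω)) (x.2.1, x.2.2) / pr P h x.2.2 ≤ 1) ∧
    (∀ x : A × B × C, pr P (fun ω => (f ω, h ω)) (x.1, x.2.2)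
        * pr P (fun ω => (g ω, h ω)) (x.2.1, x.2.2) / pr P h x.2.2 = 0 →
      pr P (fun ω => (f ω, g ω, h ω)) x = 0) := by
  constructor
  · rw [Fintype.sum_prod_type_right, Fintype.sum_prod_type_right]
    have step1 : ∀ (c : C) (b : B), ∑ a, pr P (fun ω => (f ω, h ω)) (a, c)
        * pr P (fun ω => (g ω, h ω)) (b, c) / pr P h c
        = pr P h c * (pr P (fun ω => (g ω, h ω)) (b, c) / pr P h c) := by
      intro c b
      simp only [mul_div_assoc]
      rw [← Finset.sum_mul, pr_marg_snd P f h c]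
    calc ∑ c, ∑ b, ∑ a, pr P (fun ω => (f ω, h ω)) ((a, b, c).1, (a, b, c).2.2)
          * pr P (fun ω => (g ω, h ω)) ((a, b, c).2.1, (a, b, c).2.2) / pr P h (a, b, c).2.2
        = ∑ c, ∑ b, pr P h c * (pr P (fun ω => (g ω, h ω)) (b, c) / pr P h c) := by
          refine Finset.sum_congr rfl fun c _ => Finset.sum_congr rfl fun b _ => ?_
          dsimp only
          exact step1 c b
      _ ≤ ∑ c, pr P h c := by
          refine Finset.sum_le_sum fun c _ => ?_
          rcases eq_or_ne (pr P h c) 0 with h0 | h0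
          · simp [h0]
          · have : ∀ b, pr P h c * (pr P (fun ω => (g ω, h ω)) (b, c) / pr P h c)
                = pr P (fun ω => (g ω, h ω)) (b, c) := fun b => by
              field_simp
            simp only [this]
            rw [pr_marg_snd P g h c]
      _ = 1 := sum_pr P h
  · intro x hx
    rcases eq_or_ne (pr P h x.2.2) 0 with h0 | h0
    · refine le_antisymm ?_ (pr_nonneg P _ x)
      rw [← h0]
      exact pr_le P _ h x x.2.2 (fun ω hω => by rw [← hω])
    · rw [div_eq_zero_iff] at hx
      rcases hx with hx | hx
      · rcases mul_eq_zero.mp hx with h1 | h1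
        · refine le_antisymm ?_ (pr_nonneg P _ x)
          rw [← h1]
          exact pr_le P _ _ x (x.1, x.2.2) (fun ω hω => by rw [← hω])
        · refine le_antisymm ?_ (pr_nonneg P _ x)
          rw [← h1]
          exact pr_le P _ _ x (x.2.1, x.2.2) (fun ω hω => by rw [← hω])
      · exact absurd hx h0

lemma CMI_nonneg (f : Ω → A) (g : Ω → B) (h : Ω → C) : 0 ≤ CMI P f g h := by
  obtain ⟨h4, h5⟩ := CMI_gibbs_hyps P f g h
  rw [CMI_eq P f g h]
  have := gibbs_logb_le (fun x : A × B × C => pr P (fun ω => (f ω, g ω, h ω)) x)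
    (fun x : A × B × C => pr P (fun ω => (f ω, h ω)) (x.1, x.2.2)
      * pr P (fun ω => (g ω, h ω)) (x.2.1, x.2.2) / pr P h x.2.2)
    (fun x => pr_nonneg P _ x)
    (fun x => div_nonneg (mul_nonneg (pr_nonneg P _ _) (pr_nonneg P _ _)) (pr_nonneg P _ _))
    (sum_pr P _) h4 h5
  linarith

lemma CMI_le_zero_condIndep (f : Ω → A) (g : Ω → B) (h : Ω → C)
    (hle : CMI P f g h ≤ 0) : CondIndep P f g h := by
  obtain ⟨h4, h5⟩ := CMI_gibbs_hyps P f g h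
  rw [CMI_eq P f g h] at hle
  have key := gibbs_logb_eq (fun x : A × B × C => pr P (fun ω => (f ω, g ω, h ω)) x)
    (fun x : A × B × C => pr P (fun ω => (f ω, h ω)) (x.1, x.2.2)
      * pr P (fun ω => (g ω, h ω)) (x.2.1, x.2.2) / pr P h x.2.2)
    (fun x => pr_nonneg P _ x)
    (fun x => div_nonneg (mul_nonneg (pr_nonneg P _ _) (pr_nonneg P _ _)) (pr_nonneg P _ _))
    (sum_pr P _) h4 h5 (by linarith)
  intro a b c
  have hx := key (a, b, c)
  dsimp only at hx
  rcases eq_or_ne (pr P h c) 0 with h0 | h0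
  · have hfh : pr P (fun ω => (f ω, h ω)) (a, c) = 0 := by
      refine le_antisymm ?_ (pr_nonneg P _ _)
      rw [← h0]
      exact pr_le P _ h (a, c) c (fun ω hω => by
        rw [Prod.ext_iff] at hω
        exact hω.2)
    rw [h0, hfh]
    ring
  · rw [hx]
    field_simp

end CMIsec


set_option maxHeartbeats 2000000 in
/-- Collapsing sum-rate equality forces independence and Markov relations
(converse step in the proof of Theorem 4). -/
theorem stmt12 {Ω A B0 B1 B2 B12 : Type} [Fintype Ω]
    [Fintype A] [DecidableEq A] [Fintype B0] [DecidableEq B0]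
    [Fintype B1] [DecidableEq B1] [Fintype B2] [DecidableEq B2]
    [Fintype B12] [DecidableEq B12]
    (P : FinProb Ω) (X : Ω → A) (X0 : Ω → B0) (X1 : Ω → B1) (X2 : Ω → B2)
    (X12 : Ω → B12)
    (h : 2 * MI P X X0
        + CMI P X (fun ω => (X1 ω, X2 ω, X12 ω)) X0
        + CMI P X1 X2 X0
      = MI P X (fun ω => (X1 ω, X12 ω))) :
    Indep P X X0 ∧
    CondIndep P X (fun ω => (X0 ω, X2 ω)) (fun ω => (X1 ω, X12 ω)) ∧
    CondIndep P X1 X2 X0 := by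
  have he : Function.Injective
      (fun x : (B1 × B2 × B12) × B0 => ((x.2, x.1.2.1), (x.1.1, x.1.2.2))) := by
    intro x y hxy
    obtain ⟨⟨x1, x2, x12⟩, x0⟩ := x
    obtain ⟨⟨y1, y2, y12⟩, y0⟩ := y
    simp only [Prod.mk.injEq] at hxy ⊢
    tauto
  have he2 : Function.Injective
      (fun x : A × (B1 × B2 × B12) × B0 =>
        (x.1, ((x.2.2, x.2.1.2.1), (x.2.1.1, x.2.1.2.2)))) := by
    intro x y hxy
    obtain ⟨xa, ⟨x1, x2, x12⟩, x0⟩ := x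
    obtain ⟨ya, ⟨y1, y2, y12⟩, y0⟩ := y
    simp only [Prod.mk.injEq] at hxy ⊢
    tauto
  have h1 : H P (fun ω => ((X0 ω, X2 ω), (X1 ω, X12 ω)))
      = H P (fun ω => ((X1 ω, X2 ω, X12 ω), X0 ω)) :=
    H_comp P (fun ω => ((X1 ω, X2 ω, X12 ω), X0 ω)) _ he
  have h2 : H P (fun ω => (X ω, (X0 ω, X2 ω), (X1 ω, X12 ω)))
      = H P (fun ω => (X ω, (X1 ω, X2 ω, X12 ω), X0 ω)) :=
    H_comp P (fun ω => (X ω, (X1 ω, X2 ω, X12 ω), X0 ω)) _ he2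
  have hsum : MI P X X0
      + CMI P X (fun ω => (X0 ω, X2 ω)) (fun ω => (X1 ω, X12 ω))
      + CMI P X1 X2 X0 = 0 := by
    simp only [MI, CMI] at h ⊢
    rw [h1, h2]
    linarith [h]
  have n1 := MI_nonneg P X X0
  have n2 := CMI_nonneg P X (fun ω => (X0 ω, X2 ω)) (fun ω => (X1 ω, X12 ω))
  have n3 := CMI_nonneg P X1 X2 X0
  exact ⟨MI_le_zero_indep P X X0 (by linarith),
    CMI_le_zero_condIndep P _ _ _ (by linarith),
    CMI_le_zero_condIndep P _ _ _ (by linarith)⟩
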